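/- Assume (λ,λ̄,J,κ) is a pcf-case, μ = lim inf_J(λ̄), and 𝒫̄ = ⟨𝒫_α : α < λ⟩ is a (λ,μ,<λ)-system. Then for every witness f̄ = ⟨f_α : α < λ⟩ of the pcf-case there is an unbounded set S ⊆ λ such that the re-indexed sequence ⟨f'_ξ : ξ < λ⟩, where f'_{otp(S∩α)} = f_α for α ∈ S, obeys (λ,λ̄,J,κ,𝒫̄). -/

import Mathlib

noncomputable section

open Cardinal Set Order

namespace PaperDefs

/-- `C` is a closed unbounded subset of the ordinal `δ`. -/
def IsClubIn (C : Set Ordinal) (δ : Ordinal.{0}) : Prop :=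
  C ⊆ Set.Iio δ ∧
  (∀ α < δ, ∃ β ∈ C, α < β) ∧
  (∀ α < δ, 0 < α → (∀ β < α, ∃ γ ∈ C, β < γ ∧ γ < α) → α ∈ C)

/-- `S` is a stationary subset of the ordinal `δ`. -/
def IsStationaryIn (S : Set Ordinal) (δ : Ordinal.{0}) : Prop :=
  ∀ C : Set Ordinal, IsClubIn C δ → (S ∩ C).Nonempty

/-- `S^λ_θ`, the set of ordinals below `λ` of cofinality `θ`. -/
def Scof (lam θ : Cardinal.{0}) : Set Ordinal :=
  {δ : Ordinal | δ < lam.ord ∧ δ.cof = θ}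

/-- Membership in the ideal `Ǐ_θ[λ]`. -/
def InIcheck (θ lam : Cardinal.{0}) (S : Set Ordinal) : Prop :=
  S ⊆ Scof lam θ ∧
  ∃ (a : Ordinal → Set Ordinal) (E : Set Ordinal),
    (∀ α : Ordinal, a α ⊆ Set.Iio α) ∧
    (∀ α : Ordinal, #(a α) < Cardinal.lift.{1} θ) ∧
    (∀ α β : Ordinal, β ∈ a α → a β = a α ∩ Set.Iio β) ∧
    IsClubIn E lam.ord ∧
    ∀ δ ∈ S ∩ E, ∃ e : Ordinal → Ordinal,
      StrictMonoOn e (Set.Iio θ.ord) ∧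
      (∀ ε < θ.ord, e ε < δ) ∧
      (∀ β < δ, ∃ ε < θ.ord, β < e ε) ∧
      (∀ ε < θ.ord, a (e ε) = e '' Set.Iio ε)

/-- The `γ`-th iterated cardinal successor `θ^{+γ}`. -/
def succIter (θ : Cardinal.{0}) (γ : Ordinal.{0}) : Cardinal.{0} :=
  Ordinal.limitRecOn γ θ (fun _ ih => Order.succ ih)
    (fun o _ ih => ⨆ i : (Set.Iio o), ih i.1 i.2)

/-- `J` is (the membership predicate of) a proper ideal on `ι` containing all singletons. -/
structure IsIdealOn {ι : Type*} (J : Set ι → Prop) : Prop where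
  empty_mem : J ∅
  mono : ∀ {s t : Set ι}, s ⊆ t → J t → J s
  union_mem : ∀ {s t : Set ι}, J s → J t → J (s ∪ t)
  singleton_mem : ∀ i : ι, J {i}
  proper : ¬ J Set.univ

/-- `f <_J g`. -/
def LtJ {ι : Type*} (J : Set ι → Prop) (f g : ι → Ordinal.{0}) : Prop :=
  J {i | ¬ f i < g i}

/-- The family `F` is `J`-free. -/
def FreeFam {ι : Type 1} (J : Set ι → Prop) (F : Set (ι → Ordinal.{0})) : Prop :=
  ∃ s : (ι → Ordinal.{0}) → Set ι,
    (∀ f ∈ F, J (s f)) ∧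
    ∀ f₁ ∈ F, ∀ f₂ ∈ F, f₁ ≠ f₂ → ∀ i, i ∉ s f₁ → i ∉ s f₂ → f₁ i ≠ f₂ i

/-- The family `F` is `(θ,J)`-free. -/
def FreeFamDeg {ι : Type 1} (J : Set ι → Prop) (θ : Cardinal.{0}) (F : Set (ι → Ordinal.{0})) : Prop :=
  ∀ F' ⊆ F, #F' < Cardinal.lift.{1} θ → FreeFam J F'

/-- The family `F` is `(θ₂,θ₁,J)`-free. -/
def FreeFamTwo {ι : Type 1} (J : Set ι → Prop) (θ₂ θ₁ : Cardinal.{0})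
    (F : Set (ι → Ordinal.{0})) : Prop :=
  ∀ F' ⊆ F, #F' < Cardinal.lift.{1} θ₂ →
    ∃ (P : Set (Set (ι → Ordinal.{0}))) (s : (ι → Ordinal.{0}) → Set ι),
      ⋃₀ P = F' ∧
      (∀ p ∈ P, ∀ q ∈ P, p ≠ q → Disjoint p q) ∧
      (∀ p ∈ P, #p < Cardinal.lift.{1} θ₁) ∧
      (∀ f ∈ F', J (s f)) ∧
      ∀ p₁ ∈ P, ∀ p₂ ∈ P, p₁ ≠ p₂ → ∀ f₁ ∈ p₁, ∀ f₂ ∈ p₂,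
        ∀ i, i ∉ s f₁ → i ∉ s f₂ → f₁ i ≠ f₂ i

/-- `J` is a `θ`-complete ideal: closed under unions of fewer than `θ` members. -/
def IdealComplete {ι : Type*} (J : Set ι → Prop) (θ : Cardinal.{0}) : Prop :=
  ∀ ε : Ordinal, ε < θ.ord → ∀ g : Ordinal → Set ι,
    (∀ i < ε, J (g i)) → J (⋃ i ∈ Set.Iio ε, g i)

/-- `comp(J) = sup {θ : J is θ-complete}`. -/
def IdealComp {ι : Type*} (J : Set ι → Prop) : Cardinal.{0} :=
  sSup {θ : Cardinal | IdealComplete J θ}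

/-- The canonical index type of size `κ`: the ordinals below `κ`. -/
abbrev KIdx (κ : Cardinal.{0}) : Type 1 := (Set.Iio κ.ord : Set Ordinal)

/-- `f̄ = ⟨f_α : α < λ⟩` is a `<_J`-increasing `<_J`-cofinal sequence in `∏_i λ_i`. -/
def IsPcfWitness {ι : Type 1} (J : Set ι → Prop) (lamb : ι → Cardinal.{0}) (lam : Cardinal.{0})
    (f : Ordinal.{0} → ι → Ordinal.{0}) : Prop :=
  (∀ α < lam.ord, ∀ i, f α i < (lamb i).ord) ∧
  (∀ α β : Ordinal, α < β → β < lam.ord → LtJ J (f α) (f β)) ∧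
  ∀ g : ι → Ordinal.{0}, (∀ i, g i < (lamb i).ord) → ∃ α < lam.ord, LtJ J g (f α)

/-- `(λ,λ̄,J,κ)` is a pcf-case. -/
def IsPcfCase (κ : Cardinal.{0}) (J : Set (KIdx κ) → Prop) (lamb : KIdx κ → Cardinal.{0})
    (lam : Cardinal.{0}) : Prop :=
  IsIdealOn J ∧ (∀ i, (lamb i).IsRegular ∧ κ < lamb i) ∧ lam.IsRegular ∧
    ∃ f : Ordinal → KIdx κ → Ordinal, IsPcfWitness J lamb lam f

/-- `μ = lim inf_J λ̄`: the least `χ` with `{i : λ_i < χ} ∉ J`. -/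
def IsLimInfJ {ι : Type 1} (J : Set ι → Prop) (lamb : ι → Cardinal.{0}) (μ : Cardinal.{0}) : Prop :=
  ¬ J {i | lamb i < μ} ∧ ∀ χ : Cardinal, χ < μ → J {i | lamb i < χ}

/-- `𝒫̄` is a `(λ,μ,<λ)`-system. -/
def IsSystem (lam μ : Cardinal.{0}) (P : Ordinal → Set (Set Ordinal)) : Prop :=
  (∀ α < lam.ord, ∀ a ∈ P α, a ⊆ Set.Iio α ∧ #a < Cardinal.lift.{1} μ) ∧
  (∀ α < lam.ord, ∀ a ∈ P α, ∀ β ∈ a, a ∩ Set.Iio β ∈ P β) ∧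
  ∀ α < lam.ord, #(P α) < Cardinal.lift.{1} lam

/-- `f̄` obeys `(λ,λ̄,J,κ,𝒫̄)`. -/
def Obeys {ι : Type 1} (J : Set ι → Prop) (lamb : ι → Cardinal.{0}) (lam : Cardinal.{0})
    (P : Ordinal → Set (Set Ordinal)) (f : Ordinal.{0} → ι → Ordinal.{0}) : Prop :=
  IsPcfWitness J lamb lam f ∧
  ∃ g : Set Ordinal → ι → Ordinal.{0},
    (∀ a b : Set Ordinal, (∃ α < lam.ord, a ∈ P α) → (∃ α < lam.ord, b ∈ P α) →
      (∃ γ : Ordinal, a = b ∩ Set.Iio γ) → a ≠ b →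
      ∀ i, #(b : Set Ordinal) < Cardinal.lift.{1} (lamb i) → g a i < g b i) ∧
    (∀ α < lam.ord, ∀ a ∈ P α, LtJ J (g a) (f α)) ∧
    ∀ α < lam.ord, ∀ a ∈ P α, ∀ β ∈ a, ∀ i,
      #(a : Set Ordinal) < Cardinal.lift.{1} (lamb i) → f β i < g a i

/-- `good''_θ(𝒫̄)`. -/
def GoodDblPrime (θ lam : Cardinal.{0}) (P : Ordinal → Set (Set Ordinal)) : Set Ordinal :=
  {δ : Ordinal | δ < lam.ord ∧ δ.cof = θ ∧ ∃ e : Ordinal → Ordinal,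
    StrictMonoOn e (Set.Iio θ.ord) ∧ (∀ ε < θ.ord, e ε < δ) ∧
    (∀ β < δ, ∃ ε < θ.ord, β < e ε) ∧
    ∀ ε < θ.ord, (e '' Set.Iio ε) ∈ P (e ε)}

/-- `δ` is a good (flat) point of `f̄` with respect to `J`. -/
def GoodPoint {ι : Type 1} (J : Set ι → Prop) (f : Ordinal.{0} → ι → Ordinal.{0})
    (δ : Ordinal.{0}) : Prop :=
  ∃ A : ι → Ordinal.{0} → Ordinal.{0},
    (∀ i, StrictMonoOn (A i) (Set.Iio δ.cof.ord)) ∧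
    (∀ α < δ, ∃ ε < δ.cof.ord, LtJ J (f α) (fun i => A i ε)) ∧
    ∀ ε < δ.cof.ord, ∃ α < δ, LtJ J (fun i => A i ε) (f α)

/-- `g` is a `<_J`-exact upper bound of `f̄ ↾ δ`. -/
def IsEub {ι : Type 1} (J : Set ι → Prop) (f : Ordinal.{0} → ι → Ordinal.{0}) (δ : Ordinal.{0})
    (g : ι → Ordinal.{0}) : Prop :=
  (∀ α < δ, LtJ J (f α) g) ∧ ∀ h : ι → Ordinal.{0}, LtJ J h g → ∃ α < δ, LtJ J h (f α)

/-- `δ` is a bad point: has an exact upper bound but is not good. -/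
def BadPoint {ι : Type 1} (J : Set ι → Prop) (f : Ordinal.{0} → ι → Ordinal.{0})
    (δ : Ordinal.{0}) : Prop :=
  (∃ g : ι → Ordinal.{0}, IsEub J f δ g) ∧ ¬ GoodPoint J f δ

/-- `δ` is strongly chaotic for `f̄`. -/
def SchPoint {ι : Type 1} (J : Set ι → Prop) (κ : Cardinal.{0})
    (f : Ordinal.{0} → ι → Ordinal.{0}) (δ : Ordinal.{0}) : Prop :=
  ∃ u : ι → Set Ordinal, (∀ i, #(u i) ≤ Cardinal.lift.{1} κ) ∧
    ∀ α < δ, ∃ g : ι → Ordinal.{0}, (∀ i, g i ∈ u i) ∧ ∃ β < δ, LtJ J (f α) g ∧ LtJ J g (f β)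

/-- `min((u ∪ {∞}) ∖ γ)`: the least element of `u` that is `≥ γ`, or `∞`. -/
def minAbove (u : Set Ordinal.{0}) (γ : Ordinal.{0}) : WithTop Ordinal :=
  haveI := Classical.propDecidable (∃ β ∈ u, γ ≤ β)
  if _ : ∃ β ∈ u, γ ≤ β then ((sInf {β | β ∈ u ∧ γ ≤ β} : Ordinal.{0}) : WithTop Ordinal) else ⊤

/-- `δ` is chaotic for `f̄`. -/
def ChPoint {ι : Type 1} (J : Set ι → Prop) (κ : Cardinal.{0})
    (f : Ordinal.{0} → ι → Ordinal.{0}) (δ : Ordinal.{0}) : Prop :=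
  ∃ u : ι → Set Ordinal, (∀ i, #(u i) ≤ Cardinal.lift.{1} κ) ∧
    ∀ α < δ, ∃ β : Ordinal, α < β ∧ β < δ ∧
      ¬ J {i | minAbove (u i) (f α i) < minAbove (u i) (f β i)}

/-- `f̄` is strongly-semi-`⟨θ,J⟩`-stable. -/
def StronglySemiStable {ι : Type 1} (J : Set ι → Prop) (θ : Cardinal.{0}) (lam : Ordinal.{0})
    (f : Ordinal.{0} → ι → Ordinal.{0}) : Prop :=
  ¬ ∃ (v u : Set Ordinal), v ⊆ Set.Iio lam ∧
    #v = Cardinal.lift.{1} θ ∧ #u < Cardinal.lift.{1} θ ∧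
    ∀ α ∈ v, ∀ β ∈ v, α < β →
      ¬ J {i | ¬ minAbove u (f α i) ≤ minAbove u (f β i)}

/-- `f̄` is strongly-semi-`(θ₂,θ₁,J)`-stable. -/
def StronglySemiStableRange {ι : Type 1} (J : Set ι → Prop) (θ₂ θ₁ : Cardinal.{0})
    (lam : Ordinal.{0}) (f : Ordinal.{0} → ι → Ordinal.{0}) : Prop :=
  ∀ θ : Cardinal, θ₁ ≤ θ → θ < θ₂ → StronglySemiStable J θ lam f

/-- `⟨f_α : α < α_*⟩` is a `(θ,J)`-free sequence. -/
def FreeSeq {ι : Type 1} (J : Set ι → Prop) (θ : Cardinal.{0})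
    (f : Ordinal.{0} → ι → Ordinal.{0}) (αstar : Ordinal.{0}) : Prop :=
  ∀ u : Set Ordinal, u ⊆ Set.Iio αstar → #u < Cardinal.lift.{1} θ →
    ∃ a : Ordinal → Set ι, (∀ α ∈ u, J (a α)) ∧
      ∀ α ∈ u, ∀ β ∈ u, α < β → ∀ i, i ∉ a α → i ∉ a β → f α i < f β i

end PaperDefs

/-!
Take `g_a(i) = sup {f'_β(i) + 1 : β ∈ a} + otp(a)` when `|a| < λ_i` and `0` otherwise. The
order-type summand makes `g` strictly increase along proper initial segments, and regularity of
`λ_i` keeps `g_a(i)` below `λ_i`, so that each `g_a` is `<_J`-dominated by some `f_ξ`. Choose the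
indices `e(α)` by recursion: `e(α)` is the least `ξ < λ` above `α` and all `e(β)`, `β < α`, with
`g_a <_J f_ξ` for every `a ∈ 𝒫_α`. These are fewer than `λ` requirements, each met below `λ`,
so regularity of `λ` meets them all at once.
-/

universe u

theorem Cardinal.IsRegular.sSup_lt_ord {c : Cardinal.{u}} (hc : c.IsRegular) {s : Set Ordinal.{u}}
    (hs : #s < Cardinal.lift.{u + 1} c) (h : ∀ x ∈ s, x < c.ord) : sSup s < c.ord :=
  Ordinal.sSup_lt_of_lt_cof (by rwa [← Ordinal.lift_cof, hc.cof_ord]) h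

theorem Cardinal.IsRegular.exists_lt_ord_forall_le {c : Cardinal.{u}} (hc : c.IsRegular)
    {s : Set Ordinal.{u}} (hs : #s < Cardinal.lift.{u + 1} c) (h : ∀ x ∈ s, x < c.ord) :
    ∃ ζ < c.ord, ∀ x ∈ s, x ≤ ζ :=
  ⟨sSup s, hc.sSup_lt_ord hs h, fun _ hx => le_csSup ⟨c.ord, fun x hx => (h x hx).le⟩ hx⟩

namespace PaperDefs

open scoped Ordinal

/-- The order type of `a`, lowered from `Ordinal.{u + 1}`; only meaningful for bounded `a`. -/
def setOrderType (a : Set Ordinal.{u}) : Ordinal.{u} :=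
  sInf {o | Ordinal.lift.{u + 1} o = typeLT a}

theorem lift_setOrderType {a : Set Ordinal.{u}} (ha : BddAbove a) :
    Ordinal.lift.{u + 1} (setOrderType a) = typeLT a := by
  obtain ⟨α, hα⟩ := ha
  have hle : typeLT a ≤ Ordinal.lift.{u + 1} (succ α) := by
    rw [← Ordinal.type_lt_Iio]
    exact Ordinal.type_mono fun x hx => lt_succ_of_le (hα hx)
  obtain ⟨o, ho⟩ := Ordinal.mem_range_lift_of_le hle
  exact csInf_mem (⟨o, ho⟩ : {o | Ordinal.lift.{u + 1} o = typeLT a}.Nonempty)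

theorem lift_card_setOrderType {a : Set Ordinal.{u}} (ha : BddAbove a) :
    Cardinal.lift.{u + 1} (setOrderType a).card = #a := by
  rw [Ordinal.lift_card, lift_setOrderType ha, Ordinal.card_type]

theorem setOrderType_lt_of_eq_inter_Iio {a b : Set Ordinal.{u}} (hb : BddAbove b) {γ : Ordinal.{u}}
    (hab : a = b ∩ Iio γ) (hne : a ≠ b) : setOrderType a < setOrderType b := by
  have hsub : a ⊆ b := hab ▸ inter_subset_left
  obtain ⟨β, hβb, hβa⟩ := not_subset.mp fun h => hne (hsub.antisymm h)
  have hlt : ∀ x ∈ a, x < β := fun x hx =>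
    (hab ▸ hx).2.trans_le (not_lt.mp fun h => hβa (hab ▸ ⟨hβb, h⟩))
  rw [← Ordinal.lift_lt.{u + 1}, lift_setOrderType (hb.mono hsub), lift_setOrderType hb]
  calc typeLT a
      ≤ typeLT (Iio (⟨β, hβb⟩ : b)) := Ordinal.type_le_iff'.mpr
        ⟨(OrderEmbedding.ofStrictMono (fun x : a => (⟨⟨x, hsub x.2⟩, hlt x x.2⟩ : Iio _))
          fun _ _ h => h).ltEmbedding⟩
    _ < typeLT b := Ordinal.typein_lt_type _ _

theorem bddAbove_image_of_bddAbove {a : Set Ordinal.{u}} (ha : BddAbove a)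
    (G : Ordinal.{u} → Ordinal.{u}) : BddAbove (G '' a) :=
  have := Ordinal.bddAbove_iff_small.mp ha
  Ordinal.bddAbove_of_small

section Bound

variable {ι : Type*} (lamb : ι → Cardinal.{0})

/-- The function `g_a` of `Obeys` for the sequence `F`. -/
def obedienceBound (F : Ordinal.{0} → ι → Ordinal.{0}) (a : Set Ordinal.{0}) (i : ι) :
    Ordinal.{0} :=
  if #a < Cardinal.lift.{1} (lamb i) then sSup ((fun β => F β i + 1) '' a) + setOrderType a
  else 0

variable {lamb} {F : Ordinal.{0} → ι → Ordinal.{0}} {a b : Set Ordinal.{0}} {i : ι}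

theorem obedienceBound_congr {F' : Ordinal.{0} → ι → Ordinal.{0}} (h : ∀ β ∈ a, F β = F' β) :
    obedienceBound lamb F a = obedienceBound lamb F' a := by
  funext i
  rw [obedienceBound, obedienceBound, image_congr fun β hβ => by rw [h β hβ]]


theorem lt_obedienceBound (ha : BddAbove a) (hai : #a < Cardinal.lift.{1} (lamb i)) {β : Ordinal}
    (hβ : β ∈ a) : F β i < obedienceBound lamb F a i := by
  rw [obedienceBound, if_pos hai]
  calc F β i < F β i + 1 := lt_add_one _
    _ ≤ sSup ((fun β => F β i + 1) '' a) := le_csSup (bddAbove_image_of_bddAbove ha _) ⟨β, hβ, rfl⟩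
    _ ≤ _ := le_self_add

theorem obedienceBound_lt_of_eq_inter_Iio (hb : BddAbove b) {γ : Ordinal}
    (hab : a = b ∩ Iio γ) (hne : a ≠ b) (hbi : #b < Cardinal.lift.{1} (lamb i)) :
    obedienceBound lamb F a i < obedienceBound lamb F b i := by
  have hsub : a ⊆ b := hab ▸ inter_subset_left
  have hai := (mk_le_mk_of_subset hsub).trans_lt hbi
  rw [obedienceBound, obedienceBound, if_pos hai, if_pos hbi]
  calc _ ≤ sSup ((fun β => F β i + 1) '' b) + setOrderType a :=
        add_le_add_left (csSup_le_csSup' (bddAbove_image_of_bddAbove hb _) (image_mono hsub)) _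
    _ < _ := add_lt_add_right (setOrderType_lt_of_eq_inter_Iio hb hab hne) _

theorem obedienceBound_lt_ord (hreg : (lamb i).IsRegular) (ha : BddAbove a)
    (hF : ∀ β ∈ a, F β i < (lamb i).ord) : obedienceBound lamb F a i < (lamb i).ord := by
  rw [obedienceBound]
  split_ifs with hai
  · refine Ordinal.isPrincipal_add_ord hreg.aleph0_le ?_ ?_
    · refine hreg.sSup_lt_ord (mk_image_le.trans_lt hai) ?_
      rintro _ ⟨β, hβ, rfl⟩
      exact (Cardinal.isSuccLimit_ord hreg.aleph0_le).add_one_lt (hF β hβ)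
    · rwa [Cardinal.lt_ord, ← Cardinal.lift_lt.{0, 1}, lift_card_setOrderType ha]
  · exact Cardinal.ord_pos.mpr hreg.pos

end Bound


theorem IsIdealOn.ltJ_trans {ι : Type*} {J : Set ι → Prop} (hJ : IsIdealOn J)
    {f g h : ι → Ordinal.{0}} (hfg : LtJ J f g) (hgh : LtJ J g h) : LtJ J f h :=
  hJ.mono (fun _ hi => not_and_or.mp fun h' => hi (h'.1.trans h'.2)) (hJ.union_mem hfg hgh)

section Reindex

variable {ι : Type 1} {J : Set ι → Prop} {lamb : ι → Cardinal.{0}} {lam : Cardinal.{0}}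
  {P : Ordinal → Set (Set Ordinal)} {f : Ordinal.{0} → ι → Ordinal.{0}}

theorem IsPcfWitness.ltJ_of_le (hJ : IsIdealOn J) (hf : IsPcfWitness J lamb lam f)
    {g : ι → Ordinal.{0}} {α β : Ordinal} (hg : LtJ J g (f α)) (hαβ : α ≤ β) (hβ : β < lam.ord) :
    LtJ J g (f β) :=
  hαβ.eq_or_lt.elim (fun h => h ▸ hg) fun h => hJ.ltJ_trans hg (hf.2.1 α β h hβ)

theorem IsPcfWitness.comp (hJ : IsIdealOn J) (hf : IsPcfWitness J lamb lam f)
    {e : Ordinal → Ordinal} (he : StrictMonoOn e (Iio lam.ord))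
    (hlt : ∀ ξ < lam.ord, e ξ < lam.ord) (hge : ∀ ξ < lam.ord, ξ ≤ e ξ) :
    IsPcfWitness J lamb lam (fun ξ => f (e ξ)) := by
  refine ⟨fun ξ hξ => hf.1 _ (hlt ξ hξ), fun α β hαβ hβ => ?_, fun g hg => ?_⟩
  · exact hf.2.1 _ _ (he (hαβ.trans hβ) hβ hαβ) (hlt β hβ)
  · obtain ⟨α, hα, hgα⟩ := hf.2.2 g hg
    exact ⟨α, hα, hf.ltJ_of_le hJ hgα (hge α hα) (hlt α hα)⟩

theorem obeys_of_ltJ_obedienceBound {F : Ordinal.{0} → ι → Ordinal.{0}}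
    (hF : IsPcfWitness J lamb lam F) (hP : ∀ α < lam.ord, ∀ a ∈ P α, a ⊆ Iio α)
    (hg : ∀ α < lam.ord, ∀ a ∈ P α, LtJ J (obedienceBound lamb F a) (F α)) :
    Obeys J lamb lam P F := by
  have hbdd : ∀ α < lam.ord, ∀ a ∈ P α, BddAbove a := fun α hα a ha =>
    bddAbove_Iio.mono (hP α hα a ha)
  refine ⟨hF, obedienceBound lamb F, ?_, hg, ?_⟩
  · rintro a b - ⟨α, hα, hb⟩ ⟨γ, hab⟩ hne i hbi
    exact obedienceBound_lt_of_eq_inter_Iio (hbdd α hα b hb) hab hne hbi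
  · intro α hα a ha β hβ i hai
    exact lt_obedienceBound (hbdd α hα a ha) hai hβ

variable (J lamb lam P f)

def reindexCandidates (α : Ordinal) (E : Ordinal → Ordinal) : Set Ordinal :=
  {ξ | ξ < lam.ord ∧ α ≤ ξ ∧ (∀ β < α, E β < ξ) ∧
    ∀ a ∈ P α, a ⊆ Iio α → LtJ J (obedienceBound lamb (fun β => f (E β)) a) (f ξ)}

def reindex : Ordinal → Ordinal :=
  WellFoundedLT.fix fun α e =>
    sInf (reindexCandidates J lamb lam P f α fun β => if h : β < α then e β h else 0)

variable {J lamb lam P f}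

theorem reindex_eq (α : Ordinal) :
    reindex J lamb lam P f α = sInf (reindexCandidates J lamb lam P f α
      fun β => if β < α then reindex J lamb lam P f β else 0) :=
  WellFoundedLT.fix_eq _ _

theorem reindexCandidates_congr {α : Ordinal} {E E' : Ordinal → Ordinal}
    (h : ∀ β < α, E β = E' β) :
    reindexCandidates J lamb lam P f α E = reindexCandidates J lamb lam P f α E' := by
  ext ξ
  refine and_congr_right' (and_congr_right' (and_congr (forall₂_congr fun β hβ => by rw [h β hβ])
    (forall₂_congr fun a _ => forall_congr' fun ha => ?_)))
  rw [obedienceBound_congr fun β hβ => congrArg f (h β (ha hβ))]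

theorem reindexCandidates_nonempty (hJ : IsIdealOn J) (hreg : ∀ i, (lamb i).IsRegular)
    (hlam : lam.IsRegular) (hf : IsPcfWitness J lamb lam f) {α : Ordinal} (hα : α < lam.ord)
    (hPα : #(P α) < Cardinal.lift.{1} lam) {E : Ordinal → Ordinal}
    (hE : ∀ β < α, E β < lam.ord) : (reindexCandidates J lamb lam P f α E).Nonempty := by
  have hlim := Cardinal.isSuccLimit_ord hlam.aleph0_le
  have hdom : ∀ a : P α, ∃ ξ < lam.ord,
      a.1 ⊆ Iio α → LtJ J (obedienceBound lamb (fun β => f (E β)) a) (f ξ) := by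
    intro ⟨a, _⟩
    by_cases ha : a ⊆ Iio α
    · obtain ⟨ξ, hξ, hlt⟩ := hf.2.2 _ fun i => obedienceBound_lt_ord (hreg i)
        (bddAbove_Iio.mono ha) fun β hβ => hf.1 _ (hE β (ha hβ)) i
      exact ⟨ξ, hξ, fun _ => hlt⟩
    · exact ⟨0, hlim.bot_lt, fun h => absurd h ha⟩
  choose ξ hξ hdom using hdom
  obtain ⟨ζ₁, hζ₁, hEζ₁⟩ := hlam.exists_lt_ord_forall_le (s := (fun β => succ (E β)) '' Iio α)
    (mk_image_le.trans_lt (by rwa [Cardinal.mk_Iio_ordinal, Cardinal.lift_lt, ← Cardinal.lt_ord]))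
    (by rintro _ ⟨β, hβ, rfl⟩; exact hlim.succ_lt (hE β hβ))
  obtain ⟨ζ₂, hζ₂, hξζ₂⟩ := hlam.exists_lt_ord_forall_le (s := range ξ)
    (mk_range_le.trans_lt hPα) (by rintro _ ⟨a, rfl⟩; exact hξ a)
  refine ⟨max α (max ζ₁ ζ₂), max_lt hα (max_lt hζ₁ hζ₂), le_max_left _ _, fun β hβ => ?_,
    fun a ha hsub => ?_⟩
  · exact (lt_succ (E β)).trans_le <| (hEζ₁ _ ⟨β, hβ, rfl⟩).trans <|
      (le_max_left _ _).trans (le_max_right _ _)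
  · exact hf.ltJ_of_le hJ (hdom ⟨a, ha⟩ hsub)
      ((hξζ₂ _ ⟨_, rfl⟩).trans ((le_max_right _ _).trans (le_max_right _ _)))
      (max_lt hα (max_lt hζ₁ hζ₂))

theorem reindex_mem_reindexCandidates (hJ : IsIdealOn J) (hreg : ∀ i, (lamb i).IsRegular)
    (hlam : lam.IsRegular) (hf : IsPcfWitness J lamb lam f)
    (hP : ∀ α < lam.ord, #(P α) < Cardinal.lift.{1} lam) {α : Ordinal} (hα : α < lam.ord) :
    reindex J lamb lam P f α ∈ reindexCandidates J lamb lam P f α (reindex J lamb lam P f) := by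
  induction α using WellFoundedLT.induction with
  | ind α ih =>
    rw [reindex_eq, reindexCandidates_congr fun β hβ => if_pos hβ]
    exact csInf_mem (reindexCandidates_nonempty hJ hreg hlam hf hα (hP α hα)
      fun β hβ => (ih β hβ (hβ.trans hα)).1)

end Reindex

/-- The unbounded set `S` is the range of the strictly increasing enumeration `e`, and the
re-indexed sequence is `ξ ↦ f (e ξ)`. -/
theorem statement8_general (κ lam μ : Cardinal.{0}) (J : Set (KIdx κ) → Prop)
    (lamb : KIdx κ → Cardinal.{0}) (P : Ordinal → Set (Set Ordinal))
    (hpcf : IsPcfCase κ J lamb lam)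
    (hP : IsSystem lam μ P)
    (f : Ordinal → KIdx κ → Ordinal)
    (hf : IsPcfWitness J lamb lam f) :
    ∃ e : Ordinal → Ordinal,
      StrictMonoOn e (Set.Iio lam.ord) ∧
      (∀ ξ < lam.ord, e ξ < lam.ord) ∧
      (∀ β < lam.ord, ∃ ξ < lam.ord, β < e ξ) ∧
      Obeys J lamb lam P (fun ξ => f (e ξ)) := by
  obtain ⟨hJ, hlamb, hlam, -⟩ := hpcf
  have he := fun α (hα : α < lam.ord) => reindex_mem_reindexCandidates hJ (fun i => (hlamb i).1)
    hlam hf hP.2.2 hα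
  set e := reindex J lamb lam P f
  have hlt : ∀ ξ < lam.ord, e ξ < lam.ord := fun ξ hξ => (he ξ hξ).1
  have hge : ∀ ξ < lam.ord, ξ ≤ e ξ := fun ξ hξ => (he ξ hξ).2.1
  have hmono : StrictMonoOn e (Iio lam.ord) := fun β _ α hα hβα => (he α hα).2.2.1 β hβα
  have hlim := Cardinal.isSuccLimit_ord hlam.aleph0_le
  refine ⟨e, hmono, hlt, fun β hβ => ⟨succ β, hlim.succ_lt hβ,
    (lt_succ β).trans_le (hge _ (hlim.succ_lt hβ))⟩, ?_⟩
  exact obeys_of_ltJ_obedienceBound (hf.comp hJ hmono hlt hge) (fun α hα a ha => (hP.1 α hα a ha).1)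
    fun α hα a ha => (he α hα).2.2.2 a ha (hP.1 α hα a ha).1

/-- every witness of a pcf-case has a re-indexing along an unbounded set of
indices which obeys `(λ,λ̄,J,κ,𝒫̄)`.  The unbounded set `S` is the range of the strictly
increasing enumeration `e`, and the re-indexed sequence is `ξ ↦ f (e ξ)`. -/
theorem statement8 (κ lam μ : Cardinal.{0}) (J : Set (KIdx κ) → Prop)
    (lamb : KIdx κ → Cardinal.{0}) (P : Ordinal → Set (Set Ordinal))
    (hpcf : IsPcfCase κ J lamb lam)
    (hμ : IsLimInfJ J lamb μ)
    (hP : IsSystem lam μ P)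
    (f : Ordinal → KIdx κ → Ordinal)
    (hf : IsPcfWitness J lamb lam f) :
    ∃ e : Ordinal → Ordinal,
      StrictMonoOn e (Set.Iio lam.ord) ∧
      (∀ ξ < lam.ord, e ξ < lam.ord) ∧
      (∀ β < lam.ord, ∃ ξ < lam.ord, β < e ξ) ∧
      Obeys J lamb lam P (fun ξ => f (e ξ)) :=
  statement8_general κ lam μ J lamb P hpcf hP f hf

end PaperDefs
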